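/- Let V be a 4n-dimensional inner product space with quaternionic structure (I₁,I₂,I₃). For u ∈ V and φ ∈ V*, define {u,φ} ∈ End(V) by {u,φ}(v) = φ(u)v − Σ_{s=1}^3 φ(I_s u) I_s v + (φ(v)u − g(u,v)φ^♯) − Σ_{s=1}^3 (φ(I_s v) I_s u − g(u, I_s v) I_s φ^♯). Then the map A ↦ Σ_{a=1}^{4n} {A(e_a), e^a}, for {e_a} an orthonormal basis with dual basis {e^a}, equals A ↦ Σ_{s=0}^{3} tr_{I_s}(A)·I_s + 8·A_{sp(n)}, where tr_{I_s}(A) = Σ_a g(A e_a, I_s e_a) (I₀ = Id) and A_{sp(n)} is the component of the skew part A^alt of A in the +3 eigenspace of the operator B ↦ Σ_s I_s∘B∘I_s⁻¹-type Casimir, i.e. A_{sp(n)} = (A^alt)_{[3]}. -/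
import Mathlib


open RealInnerProductSpace

noncomputable section

/-- The algebraic bracket `{u, φ} ∈ End(V)` of `u ∈ V` and a covector `φ ∈ V*`,
here encoded through its `g`-dual vector `w = φ^♯`:
`{u,φ}(v) = φ(u)v − Σ_s φ(I_s u) I_s v + (φ(v)u − g(u,v)φ^♯)
           − Σ_s (φ(I_s v) I_s u − g(u, I_s v) I_s φ^♯)`. -/
def qbr {V : Type*} [NormedAddCommGroup V] [InnerProductSpace ℝ V]
    (I : Fin 3 → V →ₗ[ℝ] V) (u w v : V) : V :=
  ⟪w, u⟫ • v - ∑ s : Fin 3, ⟪w, I s u⟫ • I s v +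
    (⟪w, v⟫ • u - ⟪u, v⟫ • w) -
    ∑ s : Fin 3, (⟪w, I s v⟫ • I s u - ⟪u, I s v⟫ • I s w)

/-- For any endomorphism `A` of a `4n`-dimensional quaternionic inner product
space, the map `A ↦ Σ_a {A(e_a), e^a}` (for an orthonormal basis `{e_a}` with
dual basis `{e^a}`) equals `A ↦ Σ_{s=0}^3 tr_{I_s}(A)·I_s + 8·A_{sp(n)}`,
where `tr_{I_s}(A) = Σ_a g(A e_a, I_s e_a)` (with `I₀ = Id`), and `A_{sp(n)}`
is the component of the skew part `A^alt = (A − Aᵀ)/2` lying in the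
`+3`-eigenspace of the Casimir (equivalently commuting with all `I_s`),
relative to the decomposition of `A^alt` into the `−1`- and `+3`-eigenspaces. -/
theorem bracket_trace_formula {V : Type*} [NormedAddCommGroup V]
    [InnerProductSpace ℝ V] [FiniteDimensional ℝ V] (n : ℕ)
    (hdim : Module.finrank ℝ V = 4 * n)
    (I : Fin 3 → V →ₗ[ℝ] V)
    (horth : ∀ s, ∀ u v : V, ⟪I s u, I s v⟫ = ⟪u, v⟫)
    (hsq : ∀ s, I s ∘ₗ I s = -LinearMap.id)
    (h12 : I 0 ∘ₗ I 1 = I 2) (h21 : I 1 ∘ₗ I 0 = -I 2)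
    (h23 : I 1 ∘ₗ I 2 = I 0) (h32 : I 2 ∘ₗ I 1 = -I 0)
    (h31 : I 2 ∘ₗ I 0 = I 1) (h13 : I 0 ∘ₗ I 2 = -I 1)
    (e : OrthonormalBasis (Fin (4 * n)) ℝ V)
    (A Aneg Apos : V →ₗ[ℝ] V)
    (hdecomp : (2 : ℝ)⁻¹ • (A - LinearMap.adjoint A) = Aneg + Apos)
    (hAneg : ∑ s : Fin 3, I s ∘ₗ Aneg ∘ₗ I s = Aneg)
    (hApos : ∀ s, Apos ∘ₗ I s = I s ∘ₗ Apos) :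
    ∀ v : V, ∑ a, qbr I (A (e a)) (e a) v =
      (∑ a, ⟪A (e a), e a⟫) • v +
      ∑ s : Fin 3, (∑ a, ⟪A (e a), I s (e a)⟫) • I s v +
      (8 : ℝ) • Apos v := by
  intro v
  set A' := LinearMap.adjoint A with hA'
  have hId : ∀ (s) (w : V), I s (I s w) = -w := by
    intro s w
    have h := LinearMap.ext_iff.mp (hsq s) w
    simpa using h
  have hskew : ∀ (s) (u w : V), ⟪I s u, w⟫ = -⟪u, I s w⟫ := by
    intro s u w
    have h1 := horth s u (I s w)
    rw [hId s w, inner_neg_right] at h1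
    linarith
  have hrepr : ∀ x : V, ∑ a, ⟪e a, x⟫ • e a = x := fun x => e.sum_repr' x
  have hB : ∀ (B : V →ₗ[ℝ] V) (x : V), ∑ a, ⟪e a, x⟫ • B (e a) = B x := by
    intro B x
    have h := congrArg B (hrepr x)
    simpa [map_sum, map_smul] using h
  have hadj : ∀ (x : V) (a : Fin (4 * n)), ⟪A (e a), x⟫ = ⟪e a, A' x⟫ := by
    intro x a
    rw [hA', LinearMap.adjoint_inner_right]
  have hd : ∀ x : V, A x - A' x = (2 : ℝ) • Aneg x + (2 : ℝ) • Apos x := by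
    intro x
    have h := LinearMap.ext_iff.mp hdecomp x
    simp only [LinearMap.smul_apply, LinearMap.sub_apply, LinearMap.add_apply] at h
    have h2 := congrArg (fun y : V => (2 : ℝ) • y) h
    simp only [smul_smul] at h2
    norm_num at h2
    exact h2
  have hnegv : ∑ s : Fin 3, I s (Aneg (I s v)) = Aneg v := by
    have h := LinearMap.ext_iff.mp hAneg v
    simpa using h
  have hposc : ∀ (s) (x : V), I s (Apos (I s x)) = -Apos x := by
    intro s x
    have h := LinearMap.ext_iff.mp (hApos s) (I s x)
    simp only [LinearMap.comp_apply] at h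
    rw [hId s x, map_neg] at h
    exact h.symm
  have key : ∑ a, qbr I (A (e a)) (e a) v =
      (∑ a, ⟪A (e a), e a⟫) • v
      + ∑ s : Fin 3, (∑ a, ⟪A (e a), I s (e a)⟫) • I s v
      + ((A v - A' v) - ∑ s : Fin 3, (I s (A (I s v)) - I s (A' (I s v)))) := by
    simp only [qbr]
    rw [Finset.sum_sub_distrib, Finset.sum_add_distrib, Finset.sum_sub_distrib,
      Finset.sum_sub_distrib]
    have e1 : ∑ a, ⟪e a, A (e a)⟫ • v = (∑ a, ⟪A (e a), e a⟫) • v := by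
      rw [← Finset.sum_smul]
      congr 1
      exact Finset.sum_congr rfl fun a _ => real_inner_comm _ _
    have e2 : ∑ a, ∑ s : Fin 3, ⟪e a, I s (A (e a))⟫ • I s v
        = -∑ s : Fin 3, (∑ a, ⟪A (e a), I s (e a)⟫) • I s v := by
      rw [Finset.sum_comm, ← Finset.sum_neg_distrib]
      refine Finset.sum_congr rfl fun s _ => ?_
      rw [← Finset.sum_smul, ← neg_smul, ← Finset.sum_neg_distrib]
      congr 1
      refine Finset.sum_congr rfl fun a _ => ?_
      rw [real_inner_comm, hskew]
    have e3 : ∑ a, ⟪e a, v⟫ • A (e a) = A v := hB A v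
    have e4 : ∑ a, ⟪A (e a), v⟫ • e a = A' v := by
      simp only [hadj v]
      exact hrepr _
    have e5 : ∑ a, ∑ s : Fin 3, (⟪e a, I s v⟫ • I s (A (e a)) - ⟪A (e a), I s v⟫ • I s (e a))
        = ∑ s : Fin 3, (I s (A (I s v)) - I s (A' (I s v))) := by
      rw [Finset.sum_comm]
      refine Finset.sum_congr rfl fun s _ => ?_
      rw [Finset.sum_sub_distrib]
      congr 1
      · exact hB (I s ∘ₗ A) (I s v)
      · simp only [hadj (I s v)]
        exact hB (I s) (A' (I s v))
    rw [e1, e2, e3, e4, e5]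
    abel
  rw [key]
  congr 1
  have hsum : ∀ s : Fin 3, I s (A (I s v)) - I s (A' (I s v))
      = (2 : ℝ) • I s (Aneg (I s v)) + (-2 : ℝ) • Apos v := by
    intro s
    rw [← map_sub, hd (I s v), map_add, map_smul, map_smul, hposc]
    module
  simp only [hsum]
  rw [Finset.sum_add_distrib, ← Finset.smul_sum, hnegv, hd v, Finset.sum_const]
  simp only [Finset.card_univ, Fintype.card_fin]
  module
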